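/- Let L, M ∈ K[D] and N = lclm(L, M), and suppose V(N) = V(L) + V(M) in a suitable extension field. If [P]_N is a nonzero completely integral element of K[D]/⟨N⟩, then at least one of [P]_L, [P]_M is a nonzero completely integral element of the respective quotient module; moreover if [P]_N is a pseudoconstant then at least one of [P]_L, [P]_M is a pseudoconstant. -/

import Mathlib

/- Framework: linear differential operators over K = C(x), represented as
   `Polynomial (RatFunc C)` where `X^i` stands for `D^i` (coefficients on the left);
   local (Puiseux/Hahn series) solutions at finite points and at infinity;
   integrality; constants and pseudoconstants of `K[D]/⟨L⟩`. -/

noncomputable section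
open Polynomial

variable (C : Type) [Field C] [IsAlgClosed C] [CharZero C]

/-- The derivative d/dx on K = C(x). -/
def KDeriv (r : RatFunc C) : RatFunc C :=
  (algebraMap (Polynomial C) (RatFunc C) (derivative r.num) * algebraMap _ _ r.denom
    - algebraMap _ _ r.num * algebraMap _ _ (derivative r.denom))
  / (algebraMap (Polynomial C) (RatFunc C) r.denom) ^ 2

/-- Linear differential operators `∑ aᵢ Dⁱ` with `aᵢ ∈ C(x)`, encoded as polynomials
    whose `i`-th coefficient is the coefficient of `Dⁱ`. -/
abbrev DOp := Polynomial (RatFunc C)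

/-- Left multiplication by `D` in `K[D]`: `D·(∑ aᵢ Dⁱ) = ∑ aᵢ Dⁱ⁺¹ + ∑ aᵢ' Dⁱ`. -/
def Dmul (P : DOp C) : DOp C :=
  X * P + P.sum fun i a => Polynomial.C (KDeriv C a) * X ^ i

/-- Multiplication (composition) in the noncommutative ring `K[D]`. -/
def opMul (P Q : DOp C) : DOp C :=
  P.sum fun i a => Polynomial.C a * (Dmul C)^[i] Q

/-- The adjoint `L ↦ L*`: `(∑ aᵢ Dⁱ)* = ∑ (−D)ⁱ aᵢ`. -/
def adjoint (L : DOp C) : DOp C :=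
  L.sum fun i a => (-1) ^ i * (Dmul C)^[i] (Polynomial.C a)

/-- Application of an operator to an element of `K` itself (rational solutions). -/
def KApply (L : DOp C) (q : RatFunc C) : RatFunc C :=
  L.sum fun i a => a * (KDeriv C)^[i] q

/-- `[P]_L` is zero in `K[D]/⟨L⟩`, i.e. `P` is a left multiple of `L`. -/
def IsZeroClass (L P : DOp C) : Prop := ∃ Q : DOp C, P = opMul C Q L

/-- `[P]_L` is a constant of `K[D]/⟨L⟩`, i.e. `D·[P]_L = [0]_L`. -/
def IsConstantClass (L P : DOp C) : Prop := ∃ Q : DOp C, Dmul C P = opMul C Q L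

/-- `N = lclm(L, M)`: the monic common left multiple of `L` and `M` of lowest order. -/
def IsLCLM (L M N : DOp C) : Prop :=
  N.Monic ∧ (∃ A, N = opMul C A L) ∧ (∃ B, N = opMul C B M) ∧
    ∀ N' : DOp C, N'.Monic → (∃ A, N' = opMul C A L) → (∃ B, N' = opMul C B M) →
      N.natDegree ≤ N'.natDegree

/-- A differential field extension of `K = C(x)`. -/
structure DiffExt where
  carrier : Type
  [isField : Field carrier]
  [isAlgK : Algebra (RatFunc C) carrier]
  [isAlgC : Algebra C carrier]
  [isTower : IsScalarTower C (RatFunc C) carrier]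
  δ : carrier → carrier
  δ_add : ∀ a b, δ (a + b) = δ a + δ b
  δ_mul : ∀ a b, δ (a * b) = a * δ b + δ a * b
  δ_algebraMap : ∀ r : RatFunc C,
    δ (algebraMap (RatFunc C) carrier r) = algebraMap (RatFunc C) carrier (KDeriv C r)

attribute [instance] DiffExt.isField DiffExt.isAlgK DiffExt.isAlgC DiffExt.isTower

/-- Application of an operator `L = ∑ aᵢ Dⁱ` to an element of a differential extension. -/
def DiffExt.apply (F : DiffExt C) (L : DOp C) (f : F.carrier) : F.carrier :=
  L.sum fun i a => algebraMap (RatFunc C) F.carrier a * F.δ^[i] f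

/-- Formal derivative `d/dt` on generalized (Hahn/Puiseux) series with rational exponents. -/
def hderiv (f : HahnSeries ℚ C) : HahnSeries ℚ C :=
  HahnSeries.embDomain (OrderIso.addRight (-1 : ℚ)).toOrderEmbedding
    { coeff := fun γ => γ • f.coeff γ,
      isPWO_support' := f.isPWO_support.mono (by
        intro γ hγ
        simp only [Function.mem_support, ne_eq] at hγ ⊢
        intro hc
        exact hγ (by rw [hc, smul_zero]) ) }

/-- The derivation `d/dx = -t² d/dt` on series at infinity, in the local coordinate `t = 1/x`. -/
def dinf (f : HahnSeries ℚ C) : HahnSeries ℚ C :=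
  -(HahnSeries.single (2 : ℚ) (1 : C) * hderiv C f)

/-- `ι` is a series expansion of `C(x)` (at a finite point for `δ = hderiv`, at infinity
    for `δ = dinf`), i.e. a ring embedding compatible with differentiation. -/
def IsExpansion (δ : HahnSeries ℚ C → HahnSeries ℚ C)
    (ι : RatFunc C →+* HahnSeries ℚ C) : Prop :=
  ∀ r, ι (KDeriv C r) = δ (ι r)

/-- Application of an operator to a local series solution via the expansion `ι`. -/
def localApply (δ : HahnSeries ℚ C → HahnSeries ℚ C)
    (ι : RatFunc C →+* HahnSeries ℚ C) (L : DOp C) (f : HahnSeries ℚ C) : HahnSeries ℚ C :=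
  L.sum fun i a => ι a * δ^[i] f

/-- A series is integral if it has no pole, i.e. all exponents are ≥ 0. -/
def IntegralSeries (f : HahnSeries ℚ C) : Prop := ∀ γ < (0 : ℚ), f.coeff γ = 0

/-- `[P]_L` is completely integral: at every point of `C ∪ {∞}` and every local series
    solution `f` of `L` there, `P·f` has no pole. -/
def CompletelyIntegral (L P : DOp C) : Prop :=
  ∀ δ ∈ ({hderiv C, dinf C} : Set (HahnSeries ℚ C → HahnSeries ℚ C)),
    ∀ ι : RatFunc C →+* HahnSeries ℚ C, IsExpansion C δ ι →
      ∀ f : HahnSeries ℚ C, localApply C δ ι L f = 0 →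
        IntegralSeries C (localApply C δ ι P f)

/-- A pseudoconstant of `L`: a completely integral element of `K[D]/⟨L⟩` that is not
    a constant. -/
def IsPseudoconstant (L P : DOp C) : Prop :=
  CompletelyIntegral C L P ∧ ¬ IsConstantClass C L P

def HasPseudoconstant (L : DOp C) : Prop := ∃ P : DOp C, IsPseudoconstant C L P

/-- `S` is the `s`-th symmetric power of `L`: the monic operator of minimal order
    annihilating all products of `s` solutions of `L`. -/
def IsSymPow (L S : DOp C) (s : ℕ) : Prop :=
  S.Monic ∧
  (∀ F : DiffExt C, ∀ f : Fin s → F.carrier,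
      (∀ i, F.apply C L (f i) = 0) → F.apply C S (∏ i, f i) = 0) ∧
  (∀ S' : DOp C, S'.Monic →
      (∀ F : DiffExt C, ∀ f : Fin s → F.carrier,
        (∀ i, F.apply C L (f i) = 0) → F.apply C S' (∏ i, f i) = 0) →
      S.natDegree ≤ S'.natDegree)

/-- `L` has only algebraic solutions: there is an algebraic differential extension of `K`
    in which the solution space of `L` has dimension `ord L`. -/
def AllAlgebraic (L : DOp C) : Prop :=
  ∃ F : DiffExt C, Algebra.IsAlgebraic (RatFunc C) F.carrier ∧
    ∃ b : Fin L.natDegree → F.carrier,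
      (∀ i, F.apply C L (b i) = 0) ∧ LinearIndependent C b

/-!
`N` is a left multiple of `L` and of `M`, so every local solution of `L` or `M` is a local
solution of `N`; hence complete integrality of `[P]_N` passes to `[P]_L` and `[P]_M`.
If both `[P]_L` and `[P]_M` vanished, `P` would be a common left multiple of `L` and `M`;
dividing it on the right by the monic `N`, the remainder is a common left multiple of lower
order than `N`, so it is zero by minimality of the lclm, and `[P]_N` vanishes too.
The same argument applied to `D·P` handles constants.
-/

structure IsDerivation {A : Type*} [CommRing A] (δ : A → A) : Prop where
  map_add : ∀ f g, δ (f + g) = δ f + δ g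
  leibniz : ∀ f g, δ (f * g) = f * δ g + δ f * g

namespace IsDerivation

variable {A : Type*} [CommRing A] {δ : A → A}

lemma map_zero (hδ : IsDerivation δ) : δ 0 = 0 := by
  simpa using hδ.map_add 0 0

lemma iterate_map_zero (hδ : IsDerivation δ) (n : ℕ) : δ^[n] 0 = 0 :=
  Function.iterate_fixed hδ.map_zero n

lemma const_mul (hδ : IsDerivation δ) (c : A) : IsDerivation fun f => c * δ f where
  map_add f g := by rw [hδ.map_add, mul_add]
  leibniz f g := by rw [hδ.leibniz]; ring

end IsDerivation

section Euler

variable {R : Type*} [Field R] [CharZero R]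

/-- The Euler operator `t d/dt`. -/
def euler (f : HahnSeries ℚ R) : HahnSeries ℚ R where
  coeff γ := γ • f.coeff γ
  isPWO_support' := f.isPWO_support.mono fun γ hγ h => hγ (by simp [h])

@[simp]
lemma euler_coeff (f : HahnSeries ℚ R) (γ : ℚ) : (euler f).coeff γ = γ • f.coeff γ := rfl

lemma euler_support_subset (f : HahnSeries ℚ R) : (euler f).support ⊆ f.support :=
  fun γ hγ h => hγ (by rw [euler_coeff, h, smul_zero])

lemma isDerivation_euler : IsDerivation (euler (R := R)) where
  map_add f g := by ext γ; simp [smul_add]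
  leibniz f g := by
    ext γ
    rw [HahnSeries.coeff_add, euler_coeff,
      HahnSeries.coeff_mul_left' f.isPWO_support (euler_support_subset f),
      HahnSeries.coeff_mul_right' g.isPWO_support (euler_support_subset g),
      HahnSeries.coeff_mul, Finset.smul_sum, ← Finset.sum_add_distrib]
    refine Finset.sum_congr rfl fun ij hij => ?_
    rw [Finset.mem_antidiagonal] at hij
    rw [euler_coeff, euler_coeff, ← hij.2.2, add_smul, smul_mul_assoc, mul_smul_comm, add_comm]

end Euler

section OperatorAlgebra

omit [IsAlgClosed C] [CharZero C]

local notation "am" => algebraMap (Polynomial C) (RatFunc C)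

/-- `KDeriv` is defined through the reduced fraction `num / denom`; the quotient rule holds for
every representative. -/
lemma KDeriv_algebraMap_div (p q : Polynomial C) (hq : q ≠ 0) :
    KDeriv C (am p / am q) =
      (am (derivative p) * am q - am p * am (derivative q)) / (am q) ^ 2 := by
  set r : RatFunc C := am p / am q
  have hdq : am q ≠ 0 := RatFunc.algebraMap_ne_zero hq
  have hdd : am r.denom ≠ 0 := RatFunc.algebraMap_ne_zero r.denom_ne_zero
  have hcross : r.num * q = p * r.denom := by
    apply RatFunc.algebraMap_injective C
    rw [map_mul, map_mul, ← div_eq_div_iff hdd hdq, RatFunc.num_div_denom r]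
  have hdcross : derivative r.num * q + r.num * derivative q
      = derivative p * r.denom + p * derivative r.denom := by
    simpa only [derivative_mul] using congrArg derivative hcross
  have hpoly : (derivative r.num * r.denom - r.num * derivative r.denom) * q ^ 2
      = (derivative p * q - p * derivative q) * r.denom ^ 2 := by
    linear_combination (q * r.denom) * hdcross
      - (derivative q * r.denom + derivative r.denom * q) * hcross
  rw [KDeriv, div_eq_div_iff (pow_ne_zero 2 hdd) (pow_ne_zero 2 hdq)]
  simpa only [map_pow, map_mul, map_sub] using congrArg am hpoly

lemma KDeriv_zero : KDeriv C 0 = 0 := by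
  simp [KDeriv]

lemma KDeriv_add (r s : RatFunc C) : KDeriv C (r + s) = KDeriv C r + KDeriv C s := by
  induction r using RatFunc.induction_on with | _ p q hq =>
  induction s using RatFunc.induction_on with | _ u v hv =>
  have h1 : am q ≠ 0 := RatFunc.algebraMap_ne_zero hq
  have h2 : am v ≠ 0 := RatFunc.algebraMap_ne_zero hv
  rw [div_add_div _ _ h1 h2, ← map_mul, ← map_mul, ← map_mul, ← map_add,
    KDeriv_algebraMap_div C _ _ (mul_ne_zero hq hv), KDeriv_algebraMap_div C _ _ hq,
    KDeriv_algebraMap_div C _ _ hv]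
  simp only [derivative_mul, map_add, map_mul]
  field_simp
  ring

lemma KDeriv_mul (r s : RatFunc C) :
    KDeriv C (r * s) = r * KDeriv C s + KDeriv C r * s := by
  induction r using RatFunc.induction_on with | _ p q hq =>
  induction s using RatFunc.induction_on with | _ u v hv =>
  have h1 : am q ≠ 0 := RatFunc.algebraMap_ne_zero hq
  have h2 : am v ≠ 0 := RatFunc.algebraMap_ne_zero hv
  rw [div_mul_div_comm, ← map_mul, ← map_mul, KDeriv_algebraMap_div C _ _ (mul_ne_zero hq hv),
    KDeriv_algebraMap_div C _ _ hq, KDeriv_algebraMap_div C _ _ hv]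
  simp only [derivative_mul, map_add, map_mul]
  field_simp
  ring

lemma opMul_zero_left (R : DOp C) : opMul C 0 R = 0 := Polynomial.sum_zero_index _

lemma opMul_add_left (P P' R : DOp C) :
    opMul C (P + P') R = opMul C P R + opMul C P' R :=
  Polynomial.sum_add_index P P' _ (fun _ => by simp) fun _ a b => by rw [map_add, add_mul]

lemma opMul_sub_left (P P' R : DOp C) :
    opMul C (P - P') R = opMul C P R - opMul C P' R :=
  eq_sub_of_add_eq (by rw [← opMul_add_left, sub_add_cancel])

lemma opMul_C_mul_left (c : RatFunc C) (P R : DOp C) :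
    opMul C (Polynomial.C c * P) R = Polynomial.C c * opMul C P R := by
  unfold opMul
  rw [← smul_eq_C_mul, Polynomial.sum_smul_index _ _ _ fun _ => by simp,
    Polynomial.sum_def, Polynomial.sum_def, Finset.mul_sum]
  exact Finset.sum_congr rfl fun i _ => by rw [map_mul, mul_assoc]

lemma opMul_monomial (n : ℕ) (a : RatFunc C) (R : DOp C) :
    opMul C (Polynomial.monomial n a) R = Polynomial.C a * (Dmul C)^[n] R :=
  Polynomial.sum_monomial_index a _ (by simp)

lemma Dmul_monomial (n : ℕ) (a : RatFunc C) :
    Dmul C (Polynomial.monomial n a)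
      = Polynomial.monomial (n + 1) a + Polynomial.monomial n (KDeriv C a) := by
  unfold Dmul
  rw [Polynomial.sum_monomial_index _ _ (by simp [KDeriv_zero]),
    C_mul_X_pow_eq_monomial, X_mul_monomial]

lemma Dmul_add (P P' : DOp C) : Dmul C (P + P') = Dmul C P + Dmul C P' := by
  unfold Dmul
  rw [Polynomial.sum_add_index P P' _ (fun _ => by simp [KDeriv_zero])
    fun _ a b => by rw [KDeriv_add, map_add, add_mul]]
  ring

lemma Dmul_C_mul (a : RatFunc C) (S : DOp C) :
    Dmul C (Polynomial.C a * S)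
      = Polynomial.C a * Dmul C S + Polynomial.C (KDeriv C a) * S := by
  induction S using Polynomial.induction_on' with
  | add p q hp hq => rw [mul_add, Dmul_add, Dmul_add, hp, hq]; ring
  | monomial n b =>
      rw [C_mul_monomial, Dmul_monomial, Dmul_monomial, KDeriv_mul]
      simp only [← C_mul_X_pow_eq_monomial, map_add, map_mul]
      ring

lemma opMul_Dmul (Q R : DOp C) : opMul C (Dmul C Q) R = Dmul C (opMul C Q R) := by
  induction Q using Polynomial.induction_on' with
  | add p q hp hq => rw [Dmul_add, opMul_add_left, opMul_add_left, hp, hq, Dmul_add]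
  | monomial n a =>
      rw [Dmul_monomial, opMul_add_left, opMul_monomial, opMul_monomial, opMul_monomial,
        Function.iterate_succ_apply', Dmul_C_mul]

lemma opMul_iterate_Dmul (k : ℕ) (Q R : DOp C) :
    opMul C ((Dmul C)^[k] Q) R = (Dmul C)^[k] (opMul C Q R) := by
  induction k with
  | zero => rfl
  | succ k ih => rw [Function.iterate_succ_apply', Function.iterate_succ_apply', opMul_Dmul, ih]

lemma opMul_assoc (P Q R : DOp C) :
    opMul C (opMul C P Q) R = opMul C P (opMul C Q R) := by
  induction P using Polynomial.induction_on' with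
  | add p q hp hq => rw [opMul_add_left, opMul_add_left, opMul_add_left, hp, hq]
  | monomial n a => rw [opMul_monomial, opMul_C_mul_left, opMul_iterate_Dmul, opMul_monomial]

lemma degree_sum_KDeriv_lt {P : DOp C} (hP : P ≠ 0) :
    (P.sum fun i a => Polynomial.C (KDeriv C a) * X ^ i).degree < (P * X).degree := by
  refine lt_of_le_of_lt ?_ (degree_lt_degree_mul_X hP)
  rw [Polynomial.sum_def]
  refine (Polynomial.degree_sum_le _ _).trans (Finset.sup_le fun i hi => ?_)
  exact (degree_C_mul_X_pow_le i _).trans (le_degree_of_ne_zero (mem_support_iff.mp hi))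

lemma monic_Dmul {P : DOp C} (hP : P.Monic) : (Dmul C P).Monic := by
  rw [Dmul, X_mul]
  exact (hP.mul monic_X).add_of_left (degree_sum_KDeriv_lt C hP.ne_zero)

lemma natDegree_Dmul {P : DOp C} (hP : P ≠ 0) : (Dmul C P).natDegree = P.natDegree + 1 := by
  rw [Dmul, X_mul, natDegree_add_eq_left_of_degree_lt (degree_sum_KDeriv_lt C hP),
    natDegree_mul_X hP]

lemma monic_iterate_Dmul {P : DOp C} (hP : P.Monic) (k : ℕ) : ((Dmul C)^[k] P).Monic := by
  induction k with
  | zero => exact hP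
  | succ k ih => rw [Function.iterate_succ_apply']; exact monic_Dmul C ih

lemma natDegree_iterate_Dmul {P : DOp C} (hP : P.Monic) (k : ℕ) :
    ((Dmul C)^[k] P).natDegree = P.natDegree + k := by
  induction k with
  | zero => rfl
  | succ k ih =>
      rw [Function.iterate_succ_apply', natDegree_Dmul C (monic_iterate_Dmul C hP k).ne_zero, ih,
        add_assoc]

/-- One step of right division: `c Dᵏ N`, with `c` the leading coefficient of `P` and
`k = ord P - ord N`, has the same leading term as `P`. -/
lemma exists_eq_opMul_add_degree_lt {N P : DOp C} (hN : N.Monic) (h : N.degree ≤ P.degree) :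
    ∃ G Y : DOp C, P = opMul C G N + Y ∧ Y.degree < P.degree := by
  have hP : P ≠ 0 := fun h0 => by simp [h0, hN.ne_zero] at h
  set k := P.natDegree - N.natDegree
  set T := Polynomial.C P.leadingCoeff * (Dmul C)^[k] N
  have hT : opMul C (Polynomial.C P.leadingCoeff * X ^ k) N = T := by
    rw [C_mul_X_pow_eq_monomial, opMul_monomial]
  have hmon := monic_iterate_Dmul C hN k
  have hnat : ((Dmul C)^[k] N).natDegree = P.natDegree := by
    have := natDegree_le_natDegree h
    rw [natDegree_iterate_Dmul C hN]
    omega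
  have hdeg : P.degree = T.degree := by
    rw [degree_C_mul (leadingCoeff_ne_zero.mpr hP), degree_eq_natDegree hP,
      degree_eq_natDegree hmon.ne_zero, hnat]
  have hlc : P.leadingCoeff = T.leadingCoeff := by
    rw [leadingCoeff_mul, leadingCoeff_C, hmon.leadingCoeff, mul_one]
  exact ⟨_, P - T, by rw [hT]; ring, degree_sub_lt_left hdeg hP hlc⟩

lemma exists_eq_opMul_add_of_monic {N : DOp C} (hN : N.Monic) (P : DOp C) :
    ∃ Q R : DOp C, P = opMul C Q N + R ∧ R.degree < N.degree := by
  induction hP : P.degree using WellFoundedLT.induction generalizing P with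
  | _ d ih =>
  by_cases hlt : P.degree < N.degree
  · exact ⟨0, P, by rw [opMul_zero_left, zero_add], hlt⟩
  obtain ⟨G, Y, rfl, hY⟩ := exists_eq_opMul_add_degree_lt C hN (not_lt.mp hlt)
  obtain ⟨Q, R, rfl, hR⟩ := ih _ (hP ▸ hY) Y rfl
  exact ⟨G + Q, R, by rw [opMul_add_left]; ring, hR⟩

lemma IsZeroClass.sub {L P P' : DOp C} (h : IsZeroClass C L P) (h' : IsZeroClass C L P') :
    IsZeroClass C L (P - P') := by
  obtain ⟨Q, rfl⟩ := h
  obtain ⟨Q', rfl⟩ := h'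
  exact ⟨Q - Q', (opMul_sub_left C Q Q' L).symm⟩

lemma IsZeroClass.opMul_left {L P : DOp C} (Q : DOp C) (h : IsZeroClass C L P) :
    IsZeroClass C L (opMul C Q P) := by
  obtain ⟨A, rfl⟩ := h
  exact ⟨opMul C Q A, (opMul_assoc C Q A L).symm⟩

lemma IsZeroClass.C_mul {L P : DOp C} (c : RatFunc C) (h : IsZeroClass C L P) :
    IsZeroClass C L (Polynomial.C c * P) := by
  obtain ⟨A, rfl⟩ := h
  exact ⟨Polynomial.C c * A, (opMul_C_mul_left C c A L).symm⟩

lemma IsLCLM.isZeroClass {L M N W : DOp C} (hN : IsLCLM C L M N) (hL : IsZeroClass C L W)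
    (hM : IsZeroClass C M W) : IsZeroClass C N W := by
  obtain ⟨hmon, hNL, hNM, hmin⟩ := hN
  obtain ⟨Q, R, hW, hR⟩ := exists_eq_opMul_add_of_monic C hmon W
  suffices hR0 : R = 0 from ⟨Q, by rw [hW, hR0, add_zero]⟩
  by_contra hR0
  have hRW : R = W - opMul C Q N := by rw [hW]; ring
  have hRL : IsZeroClass C L R := hRW ▸ hL.sub C (IsZeroClass.opMul_left C Q hNL)
  have hRM : IsZeroClass C M R := hRW ▸ hM.sub C (IsZeroClass.opMul_left C Q hNM)
  have hc : R.leadingCoeff ≠ 0 := leadingCoeff_ne_zero.mpr hR0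
  have hle := hmin _ (monic_C_mul_of_mul_leadingCoeff_eq_one (inv_mul_cancel₀ hc))
    (hRL.C_mul C _) (hRM.C_mul C _)
  rw [natDegree_C_mul (inv_ne_zero hc)] at hle
  exact hle.not_gt (natDegree_lt_natDegree hR0 hR)

variable {δ : HahnSeries ℚ C → HahnSeries ℚ C} {ι : RatFunc C →+* HahnSeries ℚ C}

lemma localApply_add_left (P P' : DOp C) (f : HahnSeries ℚ C) :
    localApply C δ ι (P + P') f = localApply C δ ι P f + localApply C δ ι P' f :=
  Polynomial.sum_add_index P P' _ (fun _ => by simp) fun _ a b => by rw [map_add, add_mul]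

lemma localApply_monomial (n : ℕ) (a : RatFunc C) (f : HahnSeries ℚ C) :
    localApply C δ ι (Polynomial.monomial n a) f = ι a * δ^[n] f :=
  Polynomial.sum_monomial_index a _ (by simp)

lemma localApply_C_mul (a : RatFunc C) (P : DOp C) (f : HahnSeries ℚ C) :
    localApply C δ ι (Polynomial.C a * P) f = ι a * localApply C δ ι P f := by
  unfold localApply
  rw [← smul_eq_C_mul, Polynomial.sum_smul_index _ _ _ fun _ => by simp,
    Polynomial.sum_def, Polynomial.sum_def, Finset.mul_sum]
  exact Finset.sum_congr rfl fun i _ => by rw [map_mul, mul_assoc]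

lemma localApply_zero_right (hδ : IsDerivation δ) (P : DOp C) : localApply C δ ι P 0 = 0 :=
  Finset.sum_eq_zero fun i _ => by simp only [hδ.iterate_map_zero, mul_zero]

lemma localApply_Dmul (hδ : IsDerivation δ) (hι : IsExpansion C δ ι) (P : DOp C)
    (f : HahnSeries ℚ C) : localApply C δ ι (Dmul C P) f = δ (localApply C δ ι P f) := by
  induction P using Polynomial.induction_on' with
  | add p q hp hq => rw [Dmul_add, localApply_add_left, localApply_add_left, hp, hq, hδ.map_add]
  | monomial n a =>
      rw [Dmul_monomial, localApply_add_left, localApply_monomial, localApply_monomial,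
        localApply_monomial, hδ.leibniz, Function.iterate_succ_apply', ← hι]

lemma localApply_iterate_Dmul (hδ : IsDerivation δ) (hι : IsExpansion C δ ι) (k : ℕ)
    (P : DOp C) (f : HahnSeries ℚ C) :
    localApply C δ ι ((Dmul C)^[k] P) f = δ^[k] (localApply C δ ι P f) := by
  induction k with
  | zero => rfl
  | succ k ih =>
      rw [Function.iterate_succ_apply', Function.iterate_succ_apply',
        localApply_Dmul C hδ hι, ih]

lemma localApply_opMul (hδ : IsDerivation δ) (hι : IsExpansion C δ ι) (Q L : DOp C)
    (f : HahnSeries ℚ C) :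
    localApply C δ ι (opMul C Q L) f = localApply C δ ι Q (localApply C δ ι L f) := by
  induction Q using Polynomial.induction_on' with
  | add p q hp hq => rw [opMul_add_left, localApply_add_left, localApply_add_left, hp, hq]
  | monomial n a =>
      rw [opMul_monomial, localApply_C_mul, localApply_iterate_Dmul C hδ hι, localApply_monomial]

end OperatorAlgebra

section LocalSolutions

omit [IsAlgClosed C]

lemma hderiv_eq_single_mul_euler (f : HahnSeries ℚ C) :
    hderiv C f = HahnSeries.single (-1 : ℚ) (1 : C) * euler f := by
  ext γ
  obtain ⟨a, rfl⟩ : ∃ a, γ = a + (-1 : ℚ) := ⟨γ + 1, by ring⟩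
  rw [HahnSeries.coeff_single_mul_add, one_mul]
  exact HahnSeries.embDomain_coeff (a := a)

lemma isDerivation_hderiv : IsDerivation (hderiv C) := by
  simpa only [funext (hderiv_eq_single_mul_euler C)] using isDerivation_euler.const_mul _

lemma isDerivation_dinf : IsDerivation (dinf C) := by
  have h : dinf C = fun f => -HahnSeries.single (2 : ℚ) (1 : C) * hderiv C f :=
    funext fun f => by rw [dinf, neg_mul]
  exact h ▸ (isDerivation_hderiv C).const_mul _

lemma isDerivation_of_mem {δ : HahnSeries ℚ C → HahnSeries ℚ C}
    (hδ : δ ∈ ({hderiv C, dinf C} : Set (HahnSeries ℚ C → HahnSeries ℚ C))) :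
    IsDerivation δ := by
  rcases hδ with rfl | rfl
  exacts [isDerivation_hderiv C, isDerivation_dinf C]

lemma CompletelyIntegral.of_isZeroClass {L N P : DOp C} (hLN : IsZeroClass C L N)
    (h : CompletelyIntegral C N P) : CompletelyIntegral C L P := by
  obtain ⟨A, rfl⟩ := hLN
  intro δ hδ ι hι f hf
  refine h δ hδ ι hι f ?_
  rw [localApply_opMul C (isDerivation_of_mem C hδ) hι, hf,
    localApply_zero_right C (isDerivation_of_mem C hδ)]

lemma CompletelyIntegral.or_of_isLCLM {L M N P W : DOp C} (hN : IsLCLM C L M N)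
    (hP : CompletelyIntegral C N P) (hW : ¬ IsZeroClass C N W) :
    (CompletelyIntegral C L P ∧ ¬ IsZeroClass C L W) ∨
      (CompletelyIntegral C M P ∧ ¬ IsZeroClass C M W) := by
  obtain ⟨-, hNL, hNM, -⟩ := id hN
  by_cases hL : IsZeroClass C L W
  · exact .inr ⟨hP.of_isZeroClass C hNM, fun hM => hW (hN.isZeroClass C hL hM)⟩
  · exact .inl ⟨hP.of_isZeroClass C hNL, hL⟩

end LocalSolutions

theorem lclm_pseudoconstant (L M N P : DOp C) (hN : IsLCLM C L M N) :
    (CompletelyIntegral C N P ∧ ¬ IsZeroClass C N P →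
      (CompletelyIntegral C L P ∧ ¬ IsZeroClass C L P) ∨
      (CompletelyIntegral C M P ∧ ¬ IsZeroClass C M P)) ∧
    (IsPseudoconstant C N P →
      IsPseudoconstant C L P ∨ IsPseudoconstant C M P) :=
  ⟨fun ⟨hP, hW⟩ => hP.or_of_isLCLM C hN hW,
    fun ⟨hP, hW⟩ => hP.or_of_isLCLM C hN (W := Dmul C P) hW⟩
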